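/- arXiv:1712.02467 — 6 statements merged into one kernel-verified Lean document; each statement's English description precedes it below -/
import Mathlib

section
/- Weak duality for the Bellman LP: for any μ : S × A → ℝ≥0 satisfying the dual flow constraint Σ_a μ(s,a) = (1-γ) q(s) + γ Σ_{s',a'} P(s|s',a') μ(s',a') for all s, and any V feasible for the primal (V ≥ TV pointwise), one has Σ_{s,a} μ(s,a) r(s,a) ≤ (1-γ) Σ_s q(s) V(s). -/
/-!
Multiply each primal constraint `r(s,a) ≤ V(s) - γ Σ_{s'} P(s'|s,a) V(s')` by `μ(s,a) ≥ 0` and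
sum. Exchanging the order of summation in the discounted term turns it into `γ Σ_s inflow(s) V(s)`,
and the flow constraint `Σ_a μ(s,a) = (1-γ) q(s) + γ inflow(s)` cancels it, leaving `(1-γ) Σ_s q(s) V(s)`.
-/

open scoped BigOperators

/-- `P` is a transition kernel: each `P s a` is a probability distribution on states. -/
def IsKernel {S A : Type*} [Fintype S] (P : S → A → S → ℝ) : Prop :=
  ∀ s a, (∀ s', 0 ≤ P s a s') ∧ (∑ s', P s a s') = 1

/-- `π` is a randomized stationary policy. -/
def IsPolicy {S A : Type*} [Fintype A] (π : S → A → ℝ) : Prop :=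
  ∀ s, (∀ a, 0 ≤ π s a) ∧ (∑ a, π s a) = 1

/-- State-transition matrix induced by a policy. -/
noncomputable def Pmat {S A : Type*} [Fintype A] (P : S → A → S → ℝ) (π : S → A → ℝ) :
    Matrix S S ℝ :=
  Matrix.of fun s s' => ∑ a, π s a * P s a s'

/-- Expected one-step reward under a policy. -/
noncomputable def rPol {S A : Type*} [Fintype A] (r : S → A → ℝ) (π : S → A → ℝ) : S → ℝ :=
  fun s => ∑ a, π s a * r s a

/-- Expected discounted reward of the stationary policy `π` started at `s`. -/
noncomputable def polValue {S A : Type*} [Fintype S] [Fintype A] [DecidableEq S]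
    (P : S → A → S → ℝ) (r : S → A → ℝ) (γ : ℝ) (π : S → A → ℝ) : S → ℝ :=
  fun s => ∑' t : ℕ, γ ^ t * ((Pmat P π ^ t).mulVec (rPol r π)) s

/-- The Bellman optimality operator. -/
noncomputable def bellman {S A : Type*} [Fintype S] [Fintype A]
    (P : S → A → S → ℝ) (r : S → A → ℝ) (γ : ℝ) (V : S → ℝ) : S → ℝ :=
  fun s => ⨆ a, (r s a + γ * ∑ s', P s a s' * V s')

/-- Primal (LP) feasibility: `V ≥ T V` pointwise, written constraint-wise. -/
def PrimalFeasible {S A : Type*} [Fintype S]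
    (P : S → A → S → ℝ) (r : S → A → ℝ) (γ : ℝ) (V : S → ℝ) : Prop :=
  ∀ s a, r s a + γ * ∑ s', P s a s' * V s' ≤ V s

/-- Dual (LP) feasibility: nonnegativity and the flow-conservation constraint. -/
def DualFeasible {S A : Type*} [Fintype S] [Fintype A]
    (P : S → A → S → ℝ) (q : S → ℝ) (γ : ℝ) (μ : S → A → ℝ) : Prop :=
  (∀ s a, 0 ≤ μ s a) ∧
  ∀ s, ∑ a, μ s a = (1 - γ) * q s + γ * ∑ s', ∑ a', P s' a' s * μ s' a'

section WeakDuality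

variable {S A : Type*} [Fintype S] [Fintype A]

theorem sum_mul_le_sum_mul_bellmanResidual {P : S → A → S → ℝ} {r : S → A → ℝ} {γ : ℝ}
    {μ : S → A → ℝ} (hμ : ∀ s a, 0 ≤ μ s a) {V : S → ℝ} (hV : PrimalFeasible P r γ V) :
    ∑ s, ∑ a, μ s a * r s a ≤ ∑ s, ∑ a, μ s a * (V s - γ * ∑ s', P s a s' * V s') := by
  gcongr with s _ a _
  · exact hμ s a
  · exact le_sub_iff_add_le.mpr (hV s a)

theorem sum_mul_expectedNext_eq_sum_inflow_mul (P : S → A → S → ℝ) (μ : S → A → ℝ)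
    (V : S → ℝ) :
    ∑ s, ∑ a, μ s a * ∑ s', P s a s' * V s' =
      ∑ s', (∑ s, ∑ a, P s a s' * μ s a) * V s' := by
  simp only [Finset.mul_sum, Finset.sum_mul]
  conv_rhs => rw [Finset.sum_comm]
  refine Finset.sum_congr rfl fun s _ => ?_
  rw [Finset.sum_comm]
  exact Finset.sum_congr rfl fun s' _ => Finset.sum_congr rfl fun a _ => by ring

theorem sum_occupancy_mul_of_flow {P : S → A → S → ℝ} {q : S → ℝ} {γ : ℝ} {μ : S → A → ℝ}
    (hflow : ∀ s, ∑ a, μ s a = (1 - γ) * q s + γ * ∑ s', ∑ a', P s' a' s * μ s' a')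
    (V : S → ℝ) :
    ∑ s, (∑ a, μ s a) * V s =
      (1 - γ) * ∑ s, q s * V s + γ * ∑ s, (∑ s', ∑ a', P s' a' s * μ s' a') * V s := by
  simp only [hflow, add_mul, Finset.sum_add_distrib, ← Finset.mul_sum, mul_assoc]

theorem sum_mul_bellmanResidual_eq_of_dualFeasible {P : S → A → S → ℝ} {q : S → ℝ} {γ : ℝ}
    {μ : S → A → ℝ} (hμ : DualFeasible P q γ μ) (V : S → ℝ) :
    ∑ s, ∑ a, μ s a * (V s - γ * ∑ s', P s a s' * V s') = (1 - γ) * ∑ s, q s * V s := by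
  have expand : ∑ s, ∑ a, μ s a * (V s - γ * ∑ s', P s a s' * V s') =
      ∑ s, (∑ a, μ s a) * V s - γ * ∑ s, ∑ a, μ s a * ∑ s', P s a s' * V s' := by
    simp only [mul_sub, Finset.sum_sub_distrib, Finset.sum_mul, Finset.mul_sum, mul_left_comm]
  rw [expand, sum_occupancy_mul_of_flow hμ.2, sum_mul_expectedNext_eq_sum_inflow_mul]
  ring

end WeakDuality

theorem bellman_lp_weak_duality_general
    {S A : Type*} [Fintype S] [Fintype A]
    (P : S → A → S → ℝ) (r : S → A → ℝ) (γ : ℝ) (q : S → ℝ)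
    (μ : S → A → ℝ) (hμ : DualFeasible P q γ μ)
    (V : S → ℝ) (hV : PrimalFeasible P r γ V) :
    ∑ s, ∑ a, μ s a * r s a ≤ (1 - γ) * ∑ s, q s * V s :=
  (sum_mul_le_sum_mul_bellmanResidual hμ.1 hV).trans_eq
    (sum_mul_bellmanResidual_eq_of_dualFeasible hμ V)

/-- weak duality for the Bellman LP. -/
theorem bellman_lp_weak_duality
    {S A : Type*} [Fintype S] [Fintype A]
    (P : S → A → S → ℝ) (r : S → A → ℝ) (γ : ℝ) (q : S → ℝ)
    (hP : IsKernel P) (hγ0 : 0 ≤ γ) (hγ1 : γ < 1)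
    (hq0 : ∀ s, 0 ≤ q s) (hq1 : ∑ s, q s = 1)
    (μ : S → A → ℝ) (hμ : DualFeasible P q γ μ)
    (V : S → ℝ) (hV : PrimalFeasible P r γ V) :
    ∑ s, ∑ a, μ s a * r s a ≤ (1 - γ) * ∑ s, q s * V s :=
  bellman_lp_weak_duality_general P r γ q μ hμ V hV
end

section
/- Strong duality of the Bellman LP: with q strictly positive, min over primal-feasible V of (1-γ) Σ_s q(s) V(s) equals max over dual-feasible μ ≥ 0 of Σ_{s,a} μ(s,a) r(s,a), and both equal (1-γ) Σ_s q(s) V*(s). -/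
open scoped BigOperators

noncomputable def occ {S : Type*} [Fintype S] (M : S → S → ℝ) (q : S → ℝ) : ℕ → S → ℝ
  | 0 => q
  | (t+1) => fun s => ∑ s', occ M q t s' * M s' s

lemma occ_nonneg {S : Type*} [Fintype S] {M : S → S → ℝ} {q : S → ℝ}
    (hM : ∀ s s', 0 ≤ M s s') (hq : ∀ s, 0 ≤ q s) : ∀ t s, 0 ≤ occ M q t s := by
  intro t
  induction t with
  | zero => exact hq
  | succ t ih =>
    intro s
    exact Finset.sum_nonneg fun s' _ => mul_nonneg (ih s') (hM s' s)

lemma occ_sum {S : Type*} [Fintype S] {M : S → S → ℝ} {q : S → ℝ}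
    (hM : ∀ s, ∑ s', M s s' = 1) (hq : ∑ s, q s = 1) : ∀ t, ∑ s, occ M q t s = 1 := by
  intro t
  induction t with
  | zero => exact hq
  | succ t ih =>
    calc ∑ s, occ M q (t+1) s = ∑ s, ∑ s', occ M q t s' * M s' s := rfl
    _ = ∑ s', ∑ s, occ M q t s' * M s' s := Finset.sum_comm
    _ = ∑ s', occ M q t s' * ∑ s, M s' s := by
          refine Finset.sum_congr rfl fun s' _ => ?_
          rw [Finset.mul_sum]
    _ = ∑ s', occ M q t s' := by
          refine Finset.sum_congr rfl fun s' _ => ?_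
          rw [hM s', mul_one]
    _ = 1 := ih

/-- strong duality of the Bellman LP: primal minimum = dual
maximum = `(1-γ) Σ q(s) V*(s)`, both attained. -/
theorem bellman_lp_strong_duality
    {S A : Type*} [Fintype S] [Fintype A] [Nonempty S] [Nonempty A]
    (P : S → A → S → ℝ) (r : S → A → ℝ) (γ : ℝ) (q : S → ℝ)
    (hP : IsKernel P) (hγ0 : 0 ≤ γ) (hγ1 : γ < 1)
    (hq : ∀ s, 0 < q s) (hq1 : ∑ s, q s = 1)
    (Vstar : S → ℝ) (hfix : bellman P r γ Vstar = Vstar) :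
    IsLeast {x : ℝ | ∃ V : S → ℝ, PrimalFeasible P r γ V ∧
        x = (1 - γ) * ∑ s, q s * V s} ((1 - γ) * ∑ s, q s * Vstar s) ∧
    IsGreatest {x : ℝ | ∃ μ : S → A → ℝ, DualFeasible P q γ μ ∧
        x = ∑ s, ∑ a, μ s a * r s a} ((1 - γ) * ∑ s, q s * Vstar s) := by
  classical
  have h1γ : (0:ℝ) < 1 - γ := by linarith
  have hfix' : ∀ s, (⨆ a, (r s a + γ * ∑ s', P s a s' * Vstar s')) = Vstar s := by
    intro s
    have := congrFun hfix s
    simpa [bellman] using this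
  have hbdd : ∀ s : S, BddAbove (Set.range fun a => r s a + γ * ∑ s', P s a s' * Vstar s') :=
    fun s => Set.Finite.bddAbove (Set.finite_range _)
  have hle : ∀ s a, r s a + γ * ∑ s', P s a s' * Vstar s' ≤ Vstar s := by
    intro s a
    exact (le_ciSup (hbdd s) a).trans (le_of_eq (hfix' s))
  -- greedy action
  have hgreedy : ∀ s : S, ∃ a, r s a + γ * ∑ s', P s a s' * Vstar s' = Vstar s := by
    intro s
    obtain ⟨a, ha⟩ := Finite.exists_max (fun a => r s a + γ * ∑ s', P s a s' * Vstar s')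
    refine ⟨a, le_antisymm (hle s a) ?_⟩
    rw [← hfix' s]
    exact ciSup_le ha
  choose astar hastar using hgreedy
  -- the common identity for dual-feasible μ
  have dualEq : ∀ μ : S → A → ℝ,
      (∀ s, ∑ a, μ s a = (1 - γ) * q s + γ * ∑ s', ∑ a', P s' a' s * μ s' a') →
      ∑ s, ∑ a, μ s a * (Vstar s - γ * ∑ s', P s a s' * Vstar s')
        = (1 - γ) * ∑ s, q s * Vstar s := by
    intro μ hflow
    have key : ∀ s, (∑ a, μ s a) - γ * ∑ s', ∑ a', P s' a' s * μ s' a' = (1 - γ) * q s := by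
      intro s; rw [hflow s]; ring
    have hA : ∀ s a, μ s a * (Vstar s - γ * ∑ s', P s a s' * Vstar s')
        = μ s a * Vstar s - γ * ∑ s', μ s a * (P s a s' * Vstar s') := by
      intro s a
      rw [mul_sub, mul_left_comm, Finset.mul_sum]
    have hL : ∑ s, ∑ a, μ s a * (Vstar s - γ * ∑ s', P s a s' * Vstar s')
        = (∑ s, (∑ a, μ s a) * Vstar s)
          - γ * ∑ s, ∑ a, ∑ s', μ s a * (P s a s' * Vstar s') := by
      have h1 : ∀ s, ∑ a, μ s a * (Vstar s - γ * ∑ s', P s a s' * Vstar s')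
          = (∑ a, μ s a) * Vstar s - γ * ∑ a, ∑ s', μ s a * (P s a s' * Vstar s') := by
        intro s
        calc ∑ a, μ s a * (Vstar s - γ * ∑ s', P s a s' * Vstar s')
            = ∑ a, (μ s a * Vstar s - γ * ∑ s', μ s a * (P s a s' * Vstar s')) :=
              Finset.sum_congr rfl fun a _ => hA s a
        _ = (∑ a, μ s a * Vstar s) - ∑ a, γ * ∑ s', μ s a * (P s a s' * Vstar s') :=
              Finset.sum_sub_distrib _ _
        _ = (∑ a, μ s a) * Vstar s - γ * ∑ a, ∑ s', μ s a * (P s a s' * Vstar s') := by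
              rw [← Finset.sum_mul, ← Finset.mul_sum]
      calc ∑ s, ∑ a, μ s a * (Vstar s - γ * ∑ s', P s a s' * Vstar s')
          = ∑ s, ((∑ a, μ s a) * Vstar s
              - γ * ∑ a, ∑ s', μ s a * (P s a s' * Vstar s')) :=
            Finset.sum_congr rfl fun s _ => h1 s
      _ = (∑ s, (∑ a, μ s a) * Vstar s)
            - ∑ s, γ * ∑ a, ∑ s', μ s a * (P s a s' * Vstar s') := Finset.sum_sub_distrib _ _
      _ = (∑ s, (∑ a, μ s a) * Vstar s)
            - γ * ∑ s, ∑ a, ∑ s', μ s a * (P s a s' * Vstar s') := by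
            rw [← Finset.mul_sum]
    have hR : ∑ s, (∑ s', ∑ a', P s' a' s * μ s' a') * Vstar s
        = ∑ s, ∑ a, ∑ s', μ s a * (P s a s' * Vstar s') := by
      calc ∑ s, (∑ s', ∑ a', P s' a' s * μ s' a') * Vstar s
          = ∑ s, ∑ s', ∑ a', P s' a' s * μ s' a' * Vstar s := by
            refine Finset.sum_congr rfl fun s _ => ?_
            rw [Finset.sum_mul]
            refine Finset.sum_congr rfl fun s' _ => ?_
            rw [Finset.sum_mul]
      _ = ∑ s', ∑ s, ∑ a', P s' a' s * μ s' a' * Vstar s := Finset.sum_comm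
      _ = ∑ s', ∑ a', ∑ s, P s' a' s * μ s' a' * Vstar s :=
            Finset.sum_congr rfl fun s' _ => Finset.sum_comm
      _ = ∑ s, ∑ a, ∑ s', μ s a * (P s a s' * Vstar s') := by
            refine Finset.sum_congr rfl fun s _ => Finset.sum_congr rfl fun a _ =>
              Finset.sum_congr rfl fun s' _ => ?_
            ring
    calc ∑ s, ∑ a, μ s a * (Vstar s - γ * ∑ s', P s a s' * Vstar s')
        = (∑ s, (∑ a, μ s a) * Vstar s)
          - γ * ∑ s, ∑ a, ∑ s', μ s a * (P s a s' * Vstar s') := hL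
    _ = (∑ s, (∑ a, μ s a) * Vstar s)
          - γ * ∑ s, (∑ s', ∑ a', P s' a' s * μ s' a') * Vstar s := by rw [hR]
    _ = ∑ s, ((∑ a, μ s a) - γ * ∑ s', ∑ a', P s' a' s * μ s' a') * Vstar s := by
          rw [Finset.mul_sum, ← Finset.sum_sub_distrib]
          refine Finset.sum_congr rfl fun s _ => ?_
          ring
    _ = ∑ s, ((1 - γ) * q s) * Vstar s :=
          Finset.sum_congr rfl fun s _ => by rw [key s]
    _ = (1 - γ) * ∑ s, q s * Vstar s := by
          rw [Finset.mul_sum]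
          refine Finset.sum_congr rfl fun s _ => ?_
          ring
  -- Primal part
  have hMnn : ∀ (s s' : S), (0:ℝ) ≤ P s (astar s) s' := fun s s' => (hP s (astar s)).1 s'
  have hM1 : ∀ s : S, ∑ s', P s (astar s) s' = 1 := fun s => (hP s (astar s)).2
  have primal_lb : ∀ V : S → ℝ, PrimalFeasible P r γ V → ∀ s, Vstar s ≤ V s := by
    intro V hV
    obtain ⟨s0, hs0⟩ := Finite.exists_min (fun s => V s - Vstar s)
    have h1 : r s0 (astar s0) + γ * ∑ s', P s0 (astar s0) s' * V s' ≤ V s0 := hV s0 _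
    have h2 := hastar s0
    have h3 : ∑ s', P s0 (astar s0) s' * (V s0 - Vstar s0)
        ≤ ∑ s', P s0 (astar s0) s' * (V s' - Vstar s') := by
      refine Finset.sum_le_sum fun s' _ => ?_
      exact mul_le_mul_of_nonneg_left (hs0 s') (hMnn s0 s')
    have h4 : ∑ s', P s0 (astar s0) s' * (V s0 - Vstar s0) = V s0 - Vstar s0 := by
      rw [← Finset.sum_mul, hM1 s0, one_mul]
    have h5 : ∑ s', P s0 (astar s0) s' * (V s' - Vstar s')
        = (∑ s', P s0 (astar s0) s' * V s') - ∑ s', P s0 (astar s0) s' * Vstar s' := by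
      rw [← Finset.sum_sub_distrib]
      refine Finset.sum_congr rfl fun s' _ => ?_
      ring
    have h6 : (0:ℝ) ≤ V s0 - Vstar s0 := by nlinarith [h3, h4, h5, h1, h2]
    intro s
    have := hs0 s
    linarith
  have primal : IsLeast {x : ℝ | ∃ V : S → ℝ, PrimalFeasible P r γ V ∧
      x = (1 - γ) * ∑ s, q s * V s} ((1 - γ) * ∑ s, q s * Vstar s) := by
    constructor
    · exact ⟨Vstar, hle, rfl⟩
    · rintro x ⟨V, hV, rfl⟩
      have : ∑ s, q s * Vstar s ≤ ∑ s, q s * V s :=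
        Finset.sum_le_sum fun s _ => mul_le_mul_of_nonneg_left (primal_lb V hV s) (hq s).le
      exact mul_le_mul_of_nonneg_left this h1γ.le
  -- Dual part: occupancy measure of the greedy policy
  set M : S → S → ℝ := fun s s' => P s (astar s) s' with hMdef
  have hoccnn : ∀ t s, 0 ≤ occ M q t s := occ_nonneg hMnn (fun s => (hq s).le)
  have hocc1 : ∀ t, ∑ s, occ M q t s = 1 := occ_sum hM1 hq1
  have hoccle : ∀ t s, occ M q t s ≤ 1 := by
    intro t s
    calc occ M q t s ≤ ∑ s', occ M q t s' :=
          Finset.single_le_sum (fun i _ => hoccnn t i) (Finset.mem_univ s)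
    _ = 1 := hocc1 t
  have hterm_nn : ∀ s t, 0 ≤ γ ^ t * occ M q t s :=
    fun s t => mul_nonneg (pow_nonneg hγ0 t) (hoccnn t s)
  have hsummable : ∀ s, Summable (fun t => γ ^ t * occ M q t s) := by
    intro s
    refine Summable.of_nonneg_of_le (hterm_nn s) (fun t => ?_)
      (summable_geometric_of_lt_one hγ0 hγ1)
    calc γ ^ t * occ M q t s ≤ γ ^ t * 1 :=
          mul_le_mul_of_nonneg_left (hoccle t s) (pow_nonneg hγ0 t)
    _ = γ ^ t := mul_one _
  set d : S → ℝ := fun s => (1 - γ) * ∑' t, γ ^ t * occ M q t s with hddef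
  have hd0 : ∀ s, 0 ≤ d s :=
    fun s => mul_nonneg h1γ.le (tsum_nonneg (hterm_nn s))
  have hshift_summable : ∀ s, Summable (fun t => γ ^ t * occ M q (t+1) s) := by
    intro s
    refine Summable.of_nonneg_of_le
      (fun t => mul_nonneg (pow_nonneg hγ0 t) (hoccnn (t+1) s)) (fun t => ?_)
      (summable_geometric_of_lt_one hγ0 hγ1)
    calc γ ^ t * occ M q (t+1) s ≤ γ ^ t * 1 :=
          mul_le_mul_of_nonneg_left (hoccle (t+1) s) (pow_nonneg hγ0 t)
    _ = γ ^ t := mul_one _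
  have hflow : ∀ s, d s = (1 - γ) * q s + γ * ∑ s', M s' s * d s' := by
    intro s
    have h1 : ∑ s', M s' s * d s' = (1 - γ) * ∑' t, γ ^ t * occ M q (t+1) s := by
      calc ∑ s', M s' s * d s'
          = ∑ s', ∑' t, M s' s * ((1 - γ) * (γ ^ t * occ M q t s')) := by
            refine Finset.sum_congr rfl fun s' _ => ?_
            calc M s' s * d s'
                = M s' s * ((1 - γ) * ∑' t, γ ^ t * occ M q t s') := rfl
            _ = ∑' t, M s' s * ((1 - γ) * (γ ^ t * occ M q t s')) := by
                rw [tsum_mul_left, tsum_mul_left]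
      _ = ∑' t, ∑ s', M s' s * ((1 - γ) * (γ ^ t * occ M q t s')) := by
            refine (Summable.tsum_finsetSum fun s' _ => ?_).symm
            exact (Summable.mul_left _ ((hsummable s').mul_left _))
      _ = ∑' t, (1 - γ) * (γ ^ t * occ M q (t+1) s) := by
            refine tsum_congr fun t => ?_
            have : occ M q (t+1) s = ∑ s', occ M q t s' * M s' s := rfl
            rw [this, Finset.mul_sum, Finset.mul_sum]
            refine Finset.sum_congr rfl fun s' _ => ?_
            ring
      _ = (1 - γ) * ∑' t, γ ^ t * occ M q (t+1) s := tsum_mul_left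
    have h2 := Summable.tsum_eq_zero_add (hsummable s)
    have h3 : ∑' t : ℕ, γ ^ (t+1) * occ M q (t+1) s = γ * ∑' t, γ ^ t * occ M q (t+1) s := by
      rw [← tsum_mul_left]
      refine tsum_congr fun t => ?_
      rw [pow_succ]
      ring
    calc d s = (1 - γ) * ∑' t : ℕ, γ ^ t * occ M q t s := rfl
    _ = (1 - γ) * (γ ^ 0 * occ M q 0 s + ∑' t : ℕ, γ ^ (t+1) * occ M q (t+1) s) := by
          rw [h2]
    _ = (1 - γ) * q s + γ * ((1 - γ) * ∑' t, γ ^ t * occ M q (t+1) s) := by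
          rw [h3]
          have : occ M q 0 s = q s := rfl
          rw [this, pow_zero, one_mul]
          ring
    _ = (1 - γ) * q s + γ * ∑ s', M s' s * d s' := by rw [h1]
  -- the optimal dual variable
  set μo : S → A → ℝ := fun s a => if a = astar s then d s else 0 with hμdef
  have hμsum : ∀ s, ∑ a, μo s a = d s := by
    intro s
    rw [hμdef]
    simp
  have hinner : ∀ s s' : S, ∑ a', P s' a' s * μo s' a' = M s' s * d s' := by
    intro s s'
    rw [hμdef]
    simp only [mul_ite, mul_zero]
    rw [Finset.sum_ite_eq' Finset.univ (astar s') (fun a' => P s' a' s * d s')]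
    simp [hMdef]
  have hμfeas : DualFeasible P q γ μo := by
    constructor
    · intro s a
      rw [hμdef]
      dsimp only
      split
      · exact hd0 s
      · exact le_refl 0
    · intro s
      rw [hμsum s]
      have : ∑ s', ∑ a', P s' a' s * μo s' a' = ∑ s', M s' s * d s' :=
        Finset.sum_congr rfl fun s' _ => hinner s s'
      rw [this]
      exact hflow s
  have hμobj : ∑ s, ∑ a, μo s a * r s a = (1 - γ) * ∑ s, q s * Vstar s := by
    have step : ∑ s, ∑ a, μo s a * r s a
        = ∑ s, ∑ a, μo s a * (Vstar s - γ * ∑ s', P s a s' * Vstar s') := by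
      refine Finset.sum_congr rfl fun s _ => Finset.sum_congr rfl fun a _ => ?_
      by_cases h : a = astar s
      · rw [h]
        have hr : r s (astar s) = Vstar s - γ * ∑ s', P s (astar s) s' * Vstar s' := by
          linarith [hastar s]
        rw [hr]
      · rw [hμdef]
        simp [h]
    rw [step]
    exact dualEq μo hμfeas.2
  have dual : IsGreatest {x : ℝ | ∃ μ : S → A → ℝ, DualFeasible P q γ μ ∧
      x = ∑ s, ∑ a, μ s a * r s a} ((1 - γ) * ∑ s, q s * Vstar s) := by
    constructor
    · exact ⟨μo, hμfeas, hμobj.symm⟩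
    · rintro x ⟨μ, ⟨hμnn, hμfl⟩, rfl⟩
      have step : ∑ s, ∑ a, μ s a * r s a
          ≤ ∑ s, ∑ a, μ s a * (Vstar s - γ * ∑ s', P s a s' * Vstar s') := by
        refine Finset.sum_le_sum fun s _ => Finset.sum_le_sum fun a _ => ?_
        refine mul_le_mul_of_nonneg_left ?_ (hμnn s a)
        linarith [hle s a]
      calc ∑ s, ∑ a, μ s a * r s a
          ≤ ∑ s, ∑ a, μ s a * (Vstar s - γ * ∑ s', P s a s' * Vstar s') := step
      _ = (1 - γ) * ∑ s, q s * Vstar s := dualEq μ hμfl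
  exact ⟨primal, dual⟩
end

section
/- The value function of any dual-feasible μ: if μ is dual-feasible and π is its induced policy (assuming positive state-marginals), then the dual objective Σ_{s,a} μ(s,a) r(s,a) equals (1-γ) Σ_s q(s) V^π(s), where V^π is the value function of π. -/
/-!
Weight the Bellman equation of `V` at `s` by the state-marginal `ν(s) = Σ_a μ(s,a)`: since
`π = μ / ν`, summing over `s` gives
`Σ_s ν(s) V(s) = Σ_{s,a} μ(s,a) r(s,a) + γ Σ_s inflow(s) V(s)`, where
`inflow(s) = Σ_{s',a'} P(s|s',a') μ(s',a')`. The flow constraint `ν = (1-γ) q + γ inflow` gives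
instead `Σ_s ν(s) V(s) = (1-γ) Σ_s q(s) V(s) + γ Σ_s inflow(s) V(s)`, and comparing the two
expressions proves the identity.
-/

open scoped BigOperators

theorem sum_mul_sum_div_sum_mul {ι 𝕜 : Type*} [Fintype ι] [Field 𝕜] (w f : ι → 𝕜)
    (hw : (∑ i, w i) ≠ 0) :
    (∑ i, w i) * ∑ i, (w i / ∑ j, w j) * f i = ∑ i, w i * f i := by
  rw [Finset.mul_sum]
  refine Finset.sum_congr rfl fun i _ => ?_
  rw [← mul_assoc, mul_div_cancel₀ _ hw]

section OccupancyMeasure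

variable {S A : Type*} [Fintype S] [Fintype A]

noncomputable def inflow (P : S → A → S → ℝ) (μ : S → A → ℝ) (s : S) : ℝ :=
  ∑ s', ∑ a', P s' a' s * μ s' a'

theorem sum_mul_sum_kernel_mul_eq_sum_inflow_mul (P : S → A → S → ℝ) (μ : S → A → ℝ)
    (V : S → ℝ) :
    (∑ s, ∑ a, μ s a * ∑ s', P s a s' * V s') = ∑ s, inflow P μ s * V s := by
  calc (∑ s, ∑ a, μ s a * ∑ s', P s a s' * V s')
      = ∑ s, ∑ s', ∑ a, P s a s' * μ s a * V s' := by
        refine Finset.sum_congr rfl fun s _ => ?_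
        simp only [Finset.mul_sum]
        rw [Finset.sum_comm]
        exact Finset.sum_congr rfl fun s' _ => Finset.sum_congr rfl fun a _ => by ring
    _ = ∑ s, inflow P μ s * V s := by
        rw [Finset.sum_comm]
        simp only [inflow, Finset.sum_mul]

theorem sum_marginal_mul_eq_of_bellman (P : S → A → S → ℝ) (r : S → A → ℝ) (γ : ℝ)
    (μ : S → A → ℝ) (V : S → ℝ) (hμ : ∀ s, (∑ a, μ s a) ≠ 0)
    (hV : ∀ s, V s = ∑ a, (μ s a / ∑ a', μ s a') * (r s a + γ * ∑ s', P s a s' * V s')) :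
    ∑ s, (∑ a, μ s a) * V s = (∑ s, ∑ a, μ s a * r s a) + γ * ∑ s, inflow P μ s * V s := by
  calc ∑ s, (∑ a, μ s a) * V s
      = ∑ s, ∑ a, μ s a * (r s a + γ * ∑ s', P s a s' * V s') :=
        Finset.sum_congr rfl fun s _ => by
          conv_lhs => rw [hV s]
          exact sum_mul_sum_div_sum_mul _ _ (hμ s)
    _ = (∑ s, ∑ a, μ s a * r s a) + γ * ∑ s, ∑ a, μ s a * ∑ s', P s a s' * V s' := by
        simp only [mul_add, Finset.sum_add_distrib, Finset.mul_sum, mul_left_comm γ]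
    _ = (∑ s, ∑ a, μ s a * r s a) + γ * ∑ s, inflow P μ s * V s := by
        rw [sum_mul_sum_kernel_mul_eq_sum_inflow_mul]

theorem sum_marginal_mul_eq_of_flow (P : S → A → S → ℝ) (q : S → ℝ) (γ : ℝ)
    (μ : S → A → ℝ) (V : S → ℝ)
    (hflow : ∀ s, ∑ a, μ s a = (1 - γ) * q s + γ * inflow P μ s) :
    ∑ s, (∑ a, μ s a) * V s = (1 - γ) * ∑ s, q s * V s + γ * ∑ s, inflow P μ s * V s := by
  simp only [hflow, add_mul, Finset.sum_add_distrib, Finset.mul_sum, mul_assoc]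

end OccupancyMeasure

theorem dual_objective_is_policy_value_general
    {S A : Type*} [Fintype S] [Fintype A]
    (P : S → A → S → ℝ) (r : S → A → ℝ) (γ : ℝ) (q : S → ℝ)
    (μ : S → A → ℝ) (hμ : DualFeasible P q γ μ)
    (hpos : ∀ s, 0 < ∑ a, μ s a)
    (Vπ : S → ℝ)
    (hbell : ∀ s, Vπ s = ∑ a, (μ s a / ∑ a', μ s a') *
        (r s a + γ * ∑ s', P s a s' * Vπ s')) :
    ∑ s, ∑ a, μ s a * r s a = (1 - γ) * ∑ s, q s * Vπ s := by
  have hB := sum_marginal_mul_eq_of_bellman P r γ μ Vπ (fun s => (hpos s).ne') hbell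
  have hF := sum_marginal_mul_eq_of_flow P q γ μ Vπ hμ.2
  linarith

/-- the dual objective of a dual-feasible `μ` equals
`(1-γ) Σ q(s) V^π(s)` for its induced policy `π`. -/
theorem dual_objective_is_policy_value
    {S A : Type*} [Fintype S] [Fintype A]
    (P : S → A → S → ℝ) (r : S → A → ℝ) (γ : ℝ) (q : S → ℝ)
    (hP : IsKernel P) (hγ0 : 0 ≤ γ) (hγ1 : γ < 1)
    (hq0 : ∀ s, 0 ≤ q s) (hq1 : ∑ s, q s = 1)
    (μ : S → A → ℝ) (hμ : DualFeasible P q γ μ)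
    (hpos : ∀ s, 0 < ∑ a, μ s a)
    (Vπ : S → ℝ)
    (hbell : ∀ s, Vπ s = ∑ a, (μ s a / ∑ a', μ s a') *
        (r s a + γ * ∑ s', P s a s' * Vπ s')) :
    ∑ s, ∑ a, μ s a * r s a = (1 - γ) * ∑ s, q s * Vπ s :=
  dual_objective_is_policy_value_general P r γ q μ hμ hpos Vπ hbell
end

section
/- Performance difference via advantages: for any two stationary policies π and π' in a finite discounted MDP, (1-γ)·E_{s~q}[V^{π'}(s) − V^π(s)] = Σ_s d^{π'}_q(s) Σ_a π'(a|s) A^π(s,a), where d^{π'}_q(s) = (1-γ) Σ_{t≥0} γ^t Pr_{π'}(s_t = s | s_0 ~ q) is the normalized discounted occupancy measure of π'. -/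
open scoped BigOperators

/-! With `M` the transition matrix of `π'`, the discounted visitation vector `d = ∑ₜ γᵗ q Mᵗ`
solves the flow equation `d = q + γ d M`, while the value gap `W = V^{π'} - V^π` solves
`W = g + γ M W`, where `g` is the `π'`-average of the advantages of `π`. Hence
`d ⬝ g = d ⬝ (1 - γ M) W = q ⬝ W`. -/

open Matrix Finset

section Stochastic

variable {S : Type*} [Fintype S] [DecidableEq S]

lemma summable_geometric_mul_pow_apply {M : Matrix S S ℝ} (hM : M ∈ rowStochastic ℝ S)
    {γ : ℝ} (hγ0 : 0 ≤ γ) (hγ1 : γ < 1) (i j : S) :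
    Summable fun t : ℕ => γ ^ t * (M ^ t) i j :=
  (summable_geometric_of_lt_one hγ0 hγ1).of_nonneg_of_le
    (fun t => mul_nonneg (pow_nonneg hγ0 t) (nonneg_of_mem_rowStochastic (pow_mem hM t)))
    (fun t => mul_le_of_le_one_right (pow_nonneg hγ0 t)
      (le_one_of_mem_rowStochastic (pow_mem hM t)))

/-- Unnormalized: the occupancy measure `d^{π}_q` of the paper is `(1 - γ) • discountedVisits`. -/
noncomputable def discountedVisits (γ : ℝ) (M : Matrix S S ℝ) (q : S → ℝ) : S → ℝ :=
  fun s => ∑' t : ℕ, γ ^ t * (q ᵥ* (M ^ t)) s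

lemma hasSum_discountedVisits {M : Matrix S S ℝ} (hM : M ∈ rowStochastic ℝ S)
    {γ : ℝ} (hγ0 : 0 ≤ γ) (hγ1 : γ < 1) (q : S → ℝ) :
    HasSum (fun t : ℕ => γ ^ t • (q ᵥ* (M ^ t))) (discountedVisits γ M q) := by
  refine Pi.hasSum.2 fun s => Summable.hasSum ?_
  have hentry : ∀ t : ℕ, γ ^ t * (q ᵥ* (M ^ t)) s = ∑ k, q k * (γ ^ t * (M ^ t) k s) :=
    fun t => by simp only [vecMul, dotProduct, mul_sum]; ring_nf
  simp only [Pi.smul_apply, smul_eq_mul, hentry]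
  exact summable_sum fun k _ => (summable_geometric_mul_pow_apply hM hγ0 hγ1 k s).mul_left _

lemma discountedVisits_eq_add_smul_vecMul {M : Matrix S S ℝ} (hM : M ∈ rowStochastic ℝ S)
    {γ : ℝ} (hγ0 : 0 ≤ γ) (hγ1 : γ < 1) (q : S → ℝ) :
    discountedVisits γ M q = q + γ • (discountedVisits γ M q ᵥ* M) := by
  have hd := hasSum_discountedVisits hM hγ0 hγ1 q
  have hshift : HasSum (fun t : ℕ => γ ^ (t + 1) • (q ᵥ* (M ^ (t + 1))))
      (discountedVisits γ M q - q) := by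
    simpa using (hasSum_nat_add_iff' 1).2 hd
  have hmap : HasSum (fun t : ℕ => γ ^ (t + 1) • (q ᵥ* (M ^ (t + 1))))
      (γ • (discountedVisits γ M q ᵥ* M)) := by
    have hcont : Continuous fun v : S → ℝ => v ᵥ* M := by fun_prop
    convert (hd.map M.vecMulLinear.toAddMonoidHom hcont).const_smul γ using 1
    · funext t
      simp [pow_succ, ← vecMul_vecMul, smul_smul, mul_comm]
    · rfl
  rw [(hshift.unique hmap).symm]
  abel

end Stochastic

lemma dotProduct_eq_of_left_right_fixedPoints {R S : Type*} [CommRing R] [Fintype S]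
    {M : Matrix S S R} {γ : R} {q d g W : S → R}
    (hd : d = q + γ • (d ᵥ* M)) (hW : W = g + γ • (M *ᵥ W)) : d ⬝ᵥ g = q ⬝ᵥ W := by
  have hq : q = d - γ • (d ᵥ* M) := eq_sub_of_add_eq hd.symm
  have hg : g = W - γ • (M *ᵥ W) := eq_sub_of_add_eq hW.symm
  rw [hq, hg, dotProduct_sub, sub_dotProduct, dotProduct_smul, smul_dotProduct,
    dotProduct_mulVec]

section MDP

variable {S A : Type*} [Fintype S] [Fintype A]

def advantage (P : S → A → S → ℝ) (r : S → A → ℝ) (γ : ℝ) (V : S → ℝ) (s : S) (a : A) : ℝ :=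
  r s a + γ * ∑ s', P s a s' * V s' - V s

lemma pmat_mulVec_apply (P : S → A → S → ℝ) (π : S → A → ℝ) (W : S → ℝ) (s : S) :
    (Pmat P π *ᵥ W) s = ∑ a, π s a * ∑ s', P s a s' * W s' := by
  simp only [mulVec, dotProduct, Pmat, of_apply, sum_mul, mul_sum, mul_assoc]
  exact sum_comm

lemma sub_eq_advantage_add_smul_pmat_mulVec {P : S → A → S → ℝ} {r : S → A → ℝ} {γ : ℝ}
    {π' : S → A → ℝ} (hπ' : ∀ s, ∑ a, π' s a = 1) {V' : S → ℝ}
    (hV' : ∀ s, V' s = ∑ a, π' s a * (r s a + γ * ∑ s', P s a s' * V' s')) (V : S → ℝ) :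
    V' - V = (fun s => ∑ a, π' s a * advantage P r γ V s a) + γ • (Pmat P π' *ᵥ (V' - V)) := by
  funext s
  have hV : V s = ∑ a, π' s a * V s := by rw [← sum_mul, hπ' s, one_mul]
  simp only [Pi.sub_apply, Pi.add_apply, Pi.smul_apply, smul_eq_mul, pmat_mulVec_apply,
    advantage]
  rw [hV' s]
  conv_lhs => rw [hV]
  rw [mul_sum, ← sum_sub_distrib, ← sum_add_distrib]
  refine sum_congr rfl fun a _ => ?_
  simp only [mul_sub, sum_sub_distrib]
  ring

lemma pmat_mem_rowStochastic [DecidableEq S] {P : S → A → S → ℝ} {π : S → A → ℝ}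
    (hP : IsKernel P) (hπ : IsPolicy π) : Pmat P π ∈ rowStochastic ℝ S := by
  refine mem_rowStochastic_iff_sum.2
    ⟨fun s s' => sum_nonneg fun a _ => mul_nonneg ((hπ s).1 a) ((hP s a).1 s'), fun s => ?_⟩
  simp only [Pmat, of_apply]
  rw [sum_comm]
  simp only [← mul_sum, (hP s _).2, mul_one, (hπ s).2]

end MDP

theorem performance_difference_general
    {S A : Type*} [Fintype S] [Fintype A] [DecidableEq S]
    (P : S → A → S → ℝ) (r : S → A → ℝ) (γ : ℝ) (q : S → ℝ)
    (hP : IsKernel P) (hγ0 : 0 ≤ γ) (hγ1 : γ < 1)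
    (π' : S → A → ℝ) (hπ' : IsPolicy π')
    (Vπ Vπ' : S → ℝ)
    (hbell' : ∀ s, Vπ' s = ∑ a, π' s a * (r s a + γ * ∑ s', P s a s' * Vπ' s')) :
    (1 - γ) * ∑ s, q s * (Vπ' s - Vπ s) =
      ∑ s, ((1 - γ) * ∑' t : ℕ, γ ^ t * Matrix.vecMul q (Pmat P π' ^ t) s) *
        ∑ a, π' s a * (r s a + γ * (∑ s', P s a s' * Vπ s') - Vπ s) := by
  have hflow := discountedVisits_eq_add_smul_vecMul (pmat_mem_rowStochastic hP hπ') hγ0 hγ1 q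
  have hgap := sub_eq_advantage_add_smul_pmat_mulVec (fun s => (hπ' s).2) hbell' Vπ
  have key : discountedVisits γ (Pmat P π') q ⬝ᵥ _ = q ⬝ᵥ (Vπ' - Vπ) :=
    dotProduct_eq_of_left_right_fixedPoints hflow hgap
  change (1 - γ) * (q ⬝ᵥ (Vπ' - Vπ)) = _
  rw [← key, dotProduct, mul_sum]
  simp only [mul_assoc]
  rfl

/-- performance-difference lemma via advantages. -/
theorem performance_difference
    {S A : Type*} [Fintype S] [Fintype A] [DecidableEq S]
    (P : S → A → S → ℝ) (r : S → A → ℝ) (γ : ℝ) (q : S → ℝ)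
    (hP : IsKernel P) (hγ0 : 0 ≤ γ) (hγ1 : γ < 1)
    (hq0 : ∀ s, 0 ≤ q s) (hq1 : ∑ s, q s = 1)
    (π π' : S → A → ℝ) (hπ : IsPolicy π) (hπ' : IsPolicy π')
    (Vπ Vπ' : S → ℝ)
    (hbell : ∀ s, Vπ s = ∑ a, π s a * (r s a + γ * ∑ s', P s a s' * Vπ s'))
    (hbell' : ∀ s, Vπ' s = ∑ a, π' s a * (r s a + γ * ∑ s', P s a s' * Vπ' s')) :
    (1 - γ) * ∑ s, q s * (Vπ' s - Vπ s) =
      ∑ s, ((1 - γ) * ∑' t : ℕ, γ ^ t * Matrix.vecMul q (Pmat P π' ^ t) s) *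
        ∑ a, π' s a * (r s a + γ * (∑ s', P s a s' * Vπ s') - Vπ s) :=
  performance_difference_general P r γ q hP hγ0 hγ1 π' hπ' Vπ Vπ' hbell'
end

section
/- Policy gradient theorem (finite, discounted): for a differentiable parametrized policy π_θ with π_θ(a|s) > 0, the gradient of J(θ) = E_{s0~q}[V^{π_θ}(s0)] satisfies ∇_θ J(θ) = (1/(1-γ)) · E_{s~d^{π_θ}_q, a~π_θ(·|s)}[ Q^{π_θ}(s,a) · ∇_θ log π_θ(a|s) ], where d^{π_θ}_q is the normalized discounted state-occupancy measure. -/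
/-!
Because `P_π` is row-stochastic, `γ P_π` has ℓ∞-operator norm at most `γ < 1`, so Neumann series
give `V^π = (1 - γ P_π)⁻¹ r_π` and `∑ₜ γᵗ q P_πᵗ = q (1 - γ P_π)⁻¹`. Unlike the series defining
`polValue`, the closed form `ρ ↦ q ⬝ (1 - γ P_ρ)⁻¹ r_ρ` makes sense for every `ρ : S → A → ℝ`, and
`P_ρ`, `r_ρ` are linear in `ρ`. With `W = (1 - γ P_ρ)⁻¹` one has `dW[δ] = γ W P_δ W`, hence
`d(q W r_ρ)[δ] = (q W) ⬝ (r_δ + γ P_δ V^ρ) = ∑ₛ (q W)ₛ ∑ₐ δ(s,a) Q(s,a)`. The chain rule through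
`θ ↦ π_θ` and `∇π = π ∇log π` give the theorem.
-/

open scoped BigOperators

namespace Matrix

variable {n : Type*} [Fintype n] [DecidableEq n] {M : Matrix n n ℝ} {γ : ℝ}

section LinftyOpNorm

attribute [local instance] Matrix.linftyOpNormedRing Matrix.linftyOpNormedAlgebra

theorem linfty_opNorm_le_one_of_mem_rowStochastic (hM : M ∈ rowStochastic ℝ n) : ‖M‖ ≤ 1 := by
  rw [linfty_opNorm_def, NNReal.coe_le_one]
  refine Finset.sup_le fun i _ => ?_
  rw [← NNReal.coe_le_one, NNReal.coe_sum]
  simp_rw [coe_nnnorm, Real.norm_of_nonneg (hM.1 i _), sum_row_of_mem_rowStochastic hM i, le_rfl]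

theorem norm_smul_lt_one_of_mem_rowStochastic (hM : M ∈ rowStochastic ℝ n) (hγ0 : 0 ≤ γ)
    (hγ1 : γ < 1) : ‖γ • M‖ < 1 :=
  calc ‖γ • M‖ = γ * ‖M‖ := by rw [norm_smul, Real.norm_of_nonneg hγ0]
    _ ≤ γ * 1 := by gcongr; exact linfty_opNorm_le_one_of_mem_rowStochastic hM
    _ < 1 := by linarith

theorem isUnit_one_sub_smul_of_mem_rowStochastic (hM : M ∈ rowStochastic ℝ n) (hγ0 : 0 ≤ γ)
    (hγ1 : γ < 1) : IsUnit (1 - γ • M) :=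
  (Units.oneSub _ (norm_smul_lt_one_of_mem_rowStochastic hM hγ0 hγ1)).isUnit

theorem hasSum_geometric_of_mem_rowStochastic (hM : M ∈ rowStochastic ℝ n) (hγ0 : 0 ≤ γ)
    (hγ1 : γ < 1) : HasSum (fun t : ℕ => γ ^ t • M ^ t) (1 - γ • M)⁻¹ := by
  have : CompleteSpace (Matrix n n ℝ) := FiniteDimensional.complete ℝ _
  have h := hasSum_geom_series_inverse (γ • M) (norm_smul_lt_one_of_mem_rowStochastic hM hγ0 hγ1)
  simp only [smul_pow, ← nonsing_inv_eq_ringInverse] at h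
  exact h

end LinftyOpNorm

theorem tsum_geometric_mulVec_of_mem_rowStochastic (hM : M ∈ rowStochastic ℝ n) (hγ0 : 0 ≤ γ)
    (hγ1 : γ < 1) (v : n → ℝ) (i : n) :
    ∑' t : ℕ, γ ^ t * (M ^ t *ᵥ v) i = ((1 - γ • M)⁻¹ *ᵥ v) i := by
  have hcont : Continuous fun N : Matrix n n ℝ => (N *ᵥ v) i :=
    (continuous_apply i).comp (continuous_id.matrix_mulVec continuous_const)
  refine (tsum_congr fun t => ?_).trans ((hasSum_geometric_of_mem_rowStochastic hM hγ0 hγ1).map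
    (LinearMap.proj i ∘ₗ (mulVecBilin ℝ ℝ).flip v).toAddMonoidHom hcont).tsum_eq
  simp

theorem tsum_geometric_vecMul_of_mem_rowStochastic (hM : M ∈ rowStochastic ℝ n) (hγ0 : 0 ≤ γ)
    (hγ1 : γ < 1) (w : n → ℝ) (j : n) :
    ∑' t : ℕ, γ ^ t * (w ᵥ* M ^ t) j = (w ᵥ* (1 - γ • M)⁻¹) j := by
  have hcont : Continuous fun N : Matrix n n ℝ => (w ᵥ* N) j :=
    (continuous_apply j).comp (continuous_const.matrix_vecMul continuous_id)
  refine (tsum_congr fun t => ?_).trans ((hasSum_geometric_of_mem_rowStochastic hM hγ0 hγ1).map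
    (LinearMap.proj j ∘ₗ vecMulBilin ℝ ℝ w).toAddMonoidHom hcont).tsum_eq
  simp

end Matrix

section MDP

open Matrix

variable {S A : Type*} [Fintype S] [Fintype A] {P : S → A → S → ℝ} {r : S → A → ℝ} {γ : ℝ}

variable (P) in
noncomputable def pmatLinearMap : (S → A → ℝ) →ₗ[ℝ] Matrix S S ℝ where
  toFun := Pmat P
  map_add' ρ σ := by ext; simp [Pmat, add_mul, Finset.sum_add_distrib]
  map_smul' c ρ := by ext; simp [Pmat, Finset.mul_sum, mul_assoc]

variable (r) in
noncomputable def rPolLinearMap : (S → A → ℝ) →ₗ[ℝ] S → ℝ where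
  toFun := rPol r
  map_add' ρ σ := by ext; simp [rPol, add_mul, Finset.sum_add_distrib]
  map_smul' c ρ := by ext; simp [rPol, Finset.mul_sum, mul_assoc]

theorem rPol_add_smul_Pmat_mulVec (δ : S → A → ℝ) (V : S → ℝ) :
    rPol r δ + γ • (Pmat P δ *ᵥ V) = fun s => ∑ a, δ s a * (r s a + γ * ∑ s', P s a s' * V s') := by
  ext s
  simp only [Pi.add_apply, Pi.smul_apply, smul_eq_mul, rPol, Pmat, mulVec, dotProduct, of_apply,
    Finset.sum_mul, Finset.mul_sum, mul_add, Finset.sum_add_distrib]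
  rw [Finset.sum_comm (s := Finset.univ) (t := Finset.univ) (f := fun s' a => γ * _)]
  ring_nf

variable [DecidableEq S]

theorem Pmat_mem_rowStochastic {ρ : S → A → ℝ} (hP : IsKernel P) (hρ : IsPolicy ρ) :
    Pmat P ρ ∈ rowStochastic ℝ S := by
  refine mem_rowStochastic_iff_sum.2
    ⟨fun s s' => Finset.sum_nonneg fun a _ => mul_nonneg ((hρ s).1 a) ((hP s a).1 s'), fun s => ?_⟩
  simp only [Pmat, of_apply]
  rw [Finset.sum_comm]
  simp [← Finset.mul_sum, (hP s _).2, (hρ s).2]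

theorem polValue_eq_inv_mulVec {ρ : S → A → ℝ} (hP : IsKernel P) (hγ0 : 0 ≤ γ) (hγ1 : γ < 1)
    (hρ : IsPolicy ρ) : polValue P r γ ρ = (1 - γ • Pmat P ρ)⁻¹ *ᵥ rPol r ρ :=
  funext <| tsum_geometric_mulVec_of_mem_rowStochastic (Pmat_mem_rowStochastic hP hρ) hγ0 hγ1 _

variable (P r γ) in
noncomputable def actionValue (ρ : S → A → ℝ) (s : S) (a : A) : ℝ :=
  r s a + γ * ∑ s', P s a s' * polValue P r γ ρ s'

theorem hasFDerivAt_dotProduct_inv_mulVec_rPol (hP : IsKernel P) (hγ0 : 0 ≤ γ) (hγ1 : γ < 1)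
    (q : S → ℝ) {ρ : S → A → ℝ} (hρ : IsPolicy ρ) :
    HasFDerivAt (fun σ : S → A → ℝ => q ⬝ᵥ ((1 - γ • Pmat P σ)⁻¹ *ᵥ rPol r σ))
      (∑ s, ∑ a, ((q ᵥ* (1 - γ • Pmat P ρ)⁻¹) s * actionValue P r γ ρ s a) •
        (ContinuousLinearMap.proj (R := ℝ) a).comp
          (ContinuousLinearMap.proj (R := ℝ) (φ := fun _ : S => A → ℝ) s)) ρ := by
  let _ := Matrix.linftyOpNormedRing (α := ℝ) (n := S)
  let _ := Matrix.linftyOpNormedAlgebra (R := ℝ) (α := ℝ) (n := S)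
  have : CompleteSpace (Matrix S S ℝ) := FiniteDimensional.complete ℝ _
  set W := (1 - γ • Pmat P ρ)⁻¹ with hW_def
  have hunit := isUnit_one_sub_smul_of_mem_rowStochastic (Pmat_mem_rowStochastic hP hρ) hγ0 hγ1
  have hW : HasFDerivAt (fun σ => (1 - γ • Pmat P σ)⁻¹)
      ((-ContinuousLinearMap.mulLeftRight ℝ _ W W).comp
        (-(γ • (pmatLinearMap P).toContinuousLinearMap))) ρ := by
    simp_rw [nonsing_inv_eq_ringInverse]
    have h := hasFDerivAt_ringInverse (𝕜 := ℝ) hunit.unit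
    rw [← Ring.inverse_unit, IsUnit.unit_spec, ← nonsing_inv_eq_ringInverse] at h
    exact h.comp ρ (((pmatLinearMap P).toContinuousLinearMap.hasFDerivAt.const_smul γ).const_sub 1)
  have hV := (mulVecBilin ℝ ℝ).toContinuousBilinearMap.hasFDerivAt_of_bilinear hW
    (rPolLinearMap r).toContinuousLinearMap.hasFDerivAt
  refine ((dotProductBilin ℝ ℝ q).toContinuousLinearMap.hasFDerivAt.comp ρ hV).congr_fderiv ?_
  ext δ
  have hWδ : ((-ContinuousLinearMap.mulLeftRight ℝ _ W W).comp
      (-(γ • (pmatLinearMap P).toContinuousLinearMap))) δ = γ • (W * Pmat P δ * W) := by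
    change -(W * -(γ • Pmat P δ) * W) = _
    simp
  have hV0 : W *ᵥ rPol r ρ = polValue P r γ ρ := (polValue_eq_inv_mulVec hP hγ0 hγ1 hρ).symm
  calc _ = (q ᵥ* W) ⬝ᵥ (rPol r δ + γ • (Pmat P δ *ᵥ polValue P r γ ρ)) := by
        simp [hWδ, ← hV0, ← hW_def, rPolLinearMap, dotProduct_mulVec, mulVec_mulVec, dotProduct_add,
          vecMul_vecMul]
    _ = (q ᵥ* W) ⬝ᵥ fun s => ∑ a, δ s a * actionValue P r γ ρ s a := by
        rw [rPol_add_smul_Pmat_mulVec]; rfl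
    _ = _ := by simp [dotProduct, Finset.mul_sum, mul_assoc, mul_comm (δ _ _)]

theorem hasFDerivAt_dotProduct_polValue {E : Type*} [NormedAddCommGroup E] [NormedSpace ℝ E]
    (hP : IsKernel P) (hγ0 : 0 ≤ γ) (hγ1 : γ < 1) (q : S → ℝ) {π : E → S → A → ℝ}
    (hpol : ∀ θ, IsPolicy (π θ)) {θ : E} {Dπ : S → A → E →L[ℝ] ℝ}
    (hDπ : ∀ s a, HasFDerivAt (fun θ' => π θ' s a) (Dπ s a) θ) :
    HasFDerivAt (fun θ' => q ⬝ᵥ polValue P r γ (π θ'))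
      (∑ s, ∑ a, ((q ᵥ* (1 - γ • Pmat P (π θ))⁻¹) s * actionValue P r γ (π θ) s a) • Dπ s a)
      θ := by
  have hπ : HasFDerivAt π (ContinuousLinearMap.pi fun s => ContinuousLinearMap.pi (Dπ s)) θ :=
    hasFDerivAt_pi.2 fun s => hasFDerivAt_pi.2 (hDπ s)
  have hJ : (fun θ' => q ⬝ᵥ polValue P r γ (π θ')) =
      (fun σ => q ⬝ᵥ ((1 - γ • Pmat P σ)⁻¹ *ᵥ rPol r σ)) ∘ π :=
    funext fun θ' => by rw [Function.comp_apply, polValue_eq_inv_mulVec hP hγ0 hγ1 (hpol θ')]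
  rw [hJ]
  refine ((hasFDerivAt_dotProduct_inv_mulVec_rPol hP hγ0 hγ1 q (hpol θ)).comp θ hπ).congr_fderiv ?_
  ext v
  simp

end MDP

theorem policy_gradient_theorem_general
    {S A : Type*} [Fintype S] [Fintype A] [DecidableEq S] {d : ℕ}
    (P : S → A → S → ℝ) (r : S → A → ℝ) (γ : ℝ) (q : S → ℝ)
    (hP : IsKernel P) (hγ0 : 0 ≤ γ) (hγ1 : γ < 1)
    (π : (Fin d → ℝ) → S → A → ℝ) (θ0 : Fin d → ℝ)
    (hpol : ∀ θ, IsPolicy (π θ))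
    (hpos : ∀ θ s a, 0 < π θ s a)
    (hdiff : ∀ s a, DifferentiableAt ℝ (fun θ => π θ s a) θ0) :
    fderiv ℝ (fun θ => ∑ s, q s * polValue P r γ (π θ) s) θ0 =
      (1 - γ)⁻¹ • ∑ s, ∑ a,
        (((1 - γ) * ∑' t : ℕ, γ ^ t * Matrix.vecMul q (Pmat P (π θ0) ^ t) s) *
            π θ0 s a *
            (r s a + γ * ∑ s', P s a s' * polValue P r γ (π θ0) s')) •
          fderiv ℝ (fun θ => Real.log (π θ s a)) θ0 := by
  have hD s a := (hdiff s a).hasFDerivAt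
  have hπ0 s a : π θ0 s a ≠ 0 := (hpos θ0 s a).ne'
  refine (hasFDerivAt_dotProduct_polValue (r := r) hP hγ0 hγ1 q hpol hD).fderiv.trans ?_
  simp only [Finset.smul_sum]
  refine Finset.sum_congr rfl fun s _ => Finset.sum_congr rfl fun a _ => ?_
  rw [((hD s a).log (hπ0 s a)).fderiv, smul_smul, smul_smul,
    Matrix.tsum_geometric_vecMul_of_mem_rowStochastic (Pmat_mem_rowStochastic hP (hpol θ0)) hγ0 hγ1]
  congr 1
  rw [actionValue]
  field_simp [hπ0 s a, sub_ne_zero.2 hγ1.ne']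

/-- the policy gradient theorem (finite, discounted). -/
theorem policy_gradient_theorem
    {S A : Type*} [Fintype S] [Fintype A] [DecidableEq S] {d : ℕ}
    (P : S → A → S → ℝ) (r : S → A → ℝ) (γ : ℝ) (q : S → ℝ)
    (hP : IsKernel P) (hγ0 : 0 ≤ γ) (hγ1 : γ < 1)
    (hq0 : ∀ s, 0 ≤ q s) (hq1 : ∑ s, q s = 1)
    (π : (Fin d → ℝ) → S → A → ℝ) (θ0 : Fin d → ℝ)
    (hpol : ∀ θ, IsPolicy (π θ))
    (hpos : ∀ θ s a, 0 < π θ s a)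
    (hdiff : ∀ s a, DifferentiableAt ℝ (fun θ => π θ s a) θ0) :
    fderiv ℝ (fun θ => ∑ s, q s * polValue P r γ (π θ) s) θ0 =
      (1 - γ)⁻¹ • ∑ s, ∑ a,
        (((1 - γ) * ∑' t : ℕ, γ ^ t * Matrix.vecMul q (Pmat P (π θ0) ^ t) s) *
            π θ0 s a *
            (r s a + γ * ∑ s', P s a s' * polValue P r γ (π θ0) s')) •
          fderiv ℝ (fun θ => Real.log (π θ s a)) θ0 :=
  policy_gradient_theorem_general P r γ q hP hγ0 hγ1 π θ0 hpol hpos hdiff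
end

section
/- If V satisfies the complementary slackness conditions with a dual-feasible μ whose state-marginals are strictly positive — i.e., V is primal feasible and μ(s,a)·[r(s,a) + γ Σ_{s'} P(s'|s,a) V(s') − V(s)] = 0 for all (s,a) — then V = V*, the optimal value function. -/
open scoped BigOperators

/-!
Complementary slackness with strictly positive state-marginals makes some action tight at every
state, so a primal-feasible `V` is a fixed point of the Bellman operator. That operator is a
`γ`-contraction in the sup norm, so its fixed point is unique and `V = V*`.
-/

section Bellman

variable {S A : Type*} [Fintype S] [Fintype A] {P : S → A → S → ℝ} {r : S → A → ℝ} {γ : ℝ}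

theorem abs_sum_mul_le_norm {p : S → ℝ} (hp : ∀ i, 0 ≤ p i) (hp1 : ∑ i, p i = 1) (f : S → ℝ) :
    |∑ i, p i * f i| ≤ ‖f‖ :=
  calc |∑ i, p i * f i| ≤ ∑ i, |p i * f i| := Finset.abs_sum_le_sum_abs _ _
    _ = ∑ i, p i * |f i| := by simp only [abs_mul, abs_of_nonneg (hp _)]
    _ ≤ ∑ i, p i * ‖f‖ := by
      gcongr with i
      · exact hp i
      · exact (Real.norm_eq_abs (f i)).symm.trans_le (norm_le_pi_norm f i)
    _ = ‖f‖ := by rw [← Finset.sum_mul, hp1, one_mul]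

theorem le_bellman (V : S → ℝ) (s : S) (a : A) :
    r s a + γ * ∑ s', P s a s' * V s' ≤ bellman P r γ V s :=
  le_ciSup (f := fun a => r s a + γ * ∑ s', P s a s' * V s') (Set.finite_range _).bddAbove a

theorem isFixedPt_bellman_of_complementary_slackness {V : S → ℝ} {μ : S → A → ℝ}
    (hV : PrimalFeasible P r γ V) (hpos : ∀ s, 0 < ∑ a, μ s a)
    (hcs : ∀ s a, μ s a * (r s a + γ * (∑ s', P s a s' * V s') - V s) = 0) :
    Function.IsFixedPt (bellman P r γ) V := by
  funext s
  obtain ⟨a, -, hμa⟩ := Finset.exists_ne_zero_of_sum_ne_zero (hpos s).ne'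
  have : Nonempty A := ⟨a⟩
  have htight : r s a + γ * ∑ s', P s a s' * V s' = V s :=
    sub_eq_zero.mp ((mul_eq_zero.mp (hcs s a)).resolve_left hμa)
  exact le_antisymm (ciSup_le (hV s)) (htight ▸ le_bellman V s a)

theorem bellman_le_add_norm_sub [Nonempty A] (hP : IsKernel P) (hγ0 : 0 ≤ γ) (V W : S → ℝ)
    (s : S) : bellman P r γ V s ≤ bellman P r γ W s + γ * ‖V - W‖ := by
  refine ciSup_le fun a => ?_
  have hdiff : |∑ s', P s a s' * V s' - ∑ s', P s a s' * W s'| ≤ ‖V - W‖ := by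
    simpa only [← Finset.sum_sub_distrib, ← mul_sub, Pi.sub_apply]
      using abs_sum_mul_le_norm (hP s a).1 (hP s a).2 (V - W)
  have := mul_le_mul_of_nonneg_left (le_of_abs_le hdiff) hγ0
  linarith [le_bellman (P := P) (r := r) (γ := γ) W s a]

theorem norm_sub_le_of_isFixedPt_bellman [Nonempty A] (hP : IsKernel P) (hγ0 : 0 ≤ γ)
    {V W : S → ℝ} (hV : Function.IsFixedPt (bellman P r γ) V)
    (hW : Function.IsFixedPt (bellman P r γ) W) :
    ‖V - W‖ ≤ γ * ‖V - W‖ := by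
  refine (pi_norm_le_iff_of_nonneg (by positivity)).mpr fun s => ?_
  have hVW := bellman_le_add_norm_sub (r := r) hP hγ0 V W s
  have hWV := bellman_le_add_norm_sub (r := r) hP hγ0 W V s
  rw [hV, hW] at hVW hWV
  rw [norm_sub_rev W V] at hWV
  rw [Pi.sub_apply, Real.norm_eq_abs, abs_sub_le_iff]
  constructor <;> linarith

theorem eq_of_isFixedPt_bellman [Nonempty A] (hP : IsKernel P) (hγ0 : 0 ≤ γ) (hγ1 : γ < 1)
    {V W : S → ℝ} (hV : Function.IsFixedPt (bellman P r γ) V)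
    (hW : Function.IsFixedPt (bellman P r γ) W) : V = W := by
  have hle := norm_sub_le_of_isFixedPt_bellman hP hγ0 hV hW
  have hzero : ‖V - W‖ = 0 := le_antisymm (by nlinarith [norm_nonneg (V - W)]) (norm_nonneg _)
  exact sub_eq_zero.mp (norm_eq_zero.mp hzero)

end Bellman

theorem complementary_slackness_implies_optimal_general
    {S A : Type*} [Fintype S] [Fintype A] [Nonempty A]
    (P : S → A → S → ℝ) (r : S → A → ℝ) (γ : ℝ)
    (hP : IsKernel P) (hγ0 : 0 ≤ γ) (hγ1 : γ < 1)
    (Vstar : S → ℝ) (hfix : bellman P r γ Vstar = Vstar)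
    (V : S → ℝ) (hV : PrimalFeasible P r γ V)
    (μ : S → A → ℝ)
    (hpos : ∀ s, 0 < ∑ a, μ s a)
    (hcs : ∀ s a, μ s a * (r s a + γ * (∑ s', P s a s' * V s') - V s) = 0) :
    V = Vstar :=
  eq_of_isFixedPt_bellman hP hγ0 hγ1
    (isFixedPt_bellman_of_complementary_slackness hV hpos hcs) hfix

/-- primal feasibility plus complementary slackness with a
dual-feasible `μ` having strictly positive state-marginals forces `V = V*`. -/
theorem complementary_slackness_implies_optimal
    {S A : Type*} [Fintype S] [Fintype A] [Nonempty S] [Nonempty A]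
    (P : S → A → S → ℝ) (r : S → A → ℝ) (γ : ℝ) (q : S → ℝ)
    (hP : IsKernel P) (hγ0 : 0 ≤ γ) (hγ1 : γ < 1)
    (hq : ∀ s, 0 < q s) (hq1 : ∑ s, q s = 1)
    (Vstar : S → ℝ) (hfix : bellman P r γ Vstar = Vstar)
    (V : S → ℝ) (hV : PrimalFeasible P r γ V)
    (μ : S → A → ℝ) (hμ : DualFeasible P q γ μ)
    (hpos : ∀ s, 0 < ∑ a, μ s a)
    (hcs : ∀ s a, μ s a * (r s a + γ * (∑ s', P s a s' * V s') - V s) = 0) :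
    V = Vstar :=
  complementary_slackness_implies_optimal_general P r γ hP hγ0 hγ1 Vstar hfix V hV μ hpos hcs
end
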